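/- N is analytic in ℂ ∖ ((−∞,−1] ∪ [1,∞)); for every x > 1 its boundary values satisfy N₊(x) = N₋(x)·[[0,0,1,0],[0,1,0,0],[−1,0,0,0],[0,0,0,1]], and for every x < −1 they satisfy N₊(x) = N₋(x)·[[1,0,0,0],[0,0,0,1],[0,0,1,0],[0,−1,0,0]]; moreover, as z → ∞ with z ∉ ℝ, N(z)·A^{−1}·diag((−z)^{1/4}, z^{1/4}, (−z)^{−1/4}, z^{−1/4}) = I + O(z^{−1}), where (−z)^{±1/4} and z^{±1/4} are principal branches. -/

import Mathlib

/-!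
Each diagonal entry of `N` is a principal power of `1 - z` or of `z + 1`, analytic off the cut
of that factor. At a point `w < 0` the power `w ^ c` is continuous from above, while from below
it tends to `w ^ c * exp (-2πic)`, which is `±I` for `c = ∓1/4`. So on either cut the two
boundary values differ by a diagonal factor with entries `1, ±I`, and `A` turns that diagonal
factor into the jump matrix. At infinity `A` cancels against `A⁻¹`, and every diagonal entry
becomes `a ^ (1/4) * b ^ (-1/4) = (a / b) ^ (1/4)` with `a - b = ±1` and `a, b` in the same open
half-plane, so it is `1 + O(1/z)`.
-/

open Complex Filter Topology Set Asymptotics Matrix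

/-- The constant matrix `A`. -/
noncomputable def Amat : Matrix (Fin 4) (Fin 4) ℂ :=
  ((1 : ℂ) / Real.sqrt 2) •
    !![1, 0, -Complex.I, 0;
       0, 1, 0, Complex.I;
       -Complex.I, 0, 1, 0;
       0, Complex.I, 0, 1]

/-- The global parametrix `N(z) = diag((1-z)^{-1/4}, (z+1)^{-1/4}, (1-z)^{1/4}, (z+1)^{1/4})·A`,
with principal branches. -/
noncomputable def Nmat (z : ℂ) : Matrix (Fin 4) (Fin 4) ℂ :=
  Matrix.diagonal ![(1 - z) ^ (-(1:ℂ)/4), (z + 1) ^ (-(1:ℂ)/4),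
    (1 - z) ^ ((1:ℂ)/4), (z + 1) ^ ((1:ℂ)/4)] * Amat

/-- `ℂ ∖ ((-∞,-1] ∪ [1,∞))`. -/
def twoCutPlane : Set ℂ := {z : ℂ | ¬(z.im = 0 ∧ (z.re ≤ -1 ∨ 1 ≤ z.re))}

open Real

lemma continuousWithinAt_cpow_const_of_re_neg_of_im_zero {a : ℂ} (hre : a.re < 0)
    (him : a.im = 0) (c : ℂ) : ContinuousWithinAt (· ^ c) {z : ℂ | 0 ≤ z.im} a := by
  have ha : a ≠ 0 := fun h => by simp [h] at hre
  refine (((continuousWithinAt_log_of_re_neg_of_im_zero hre him).mul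
    continuousWithinAt_const).cexp).congr_of_eventuallyEq ?_ (cpow_def_of_ne_zero ha c)
  filter_upwards [nhdsWithin_le_nhds (eventually_ne_nhds ha)] with z hz
  exact cpow_def_of_ne_zero hz c

lemma tendsto_cpow_const_nhdsWithin_im_neg_of_re_neg_of_im_zero {a : ℂ} (hre : a.re < 0)
    (him : a.im = 0) (c : ℂ) :
    Tendsto (· ^ c) (𝓝[{z : ℂ | z.im < 0}] a) (𝓝 (a ^ c * exp (-2 * π * I * c))) := by
  have ha : a ≠ 0 := fun h => by simp [h] at hre
  have hlim : a ^ c * exp (-2 * π * I * c) = exp ((Real.log ‖a‖ - π * I) * c) := by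
    rw [cpow_def_of_ne_zero ha, Complex.log, arg_eq_pi_iff.2 ⟨hre, him⟩, ← Complex.exp_add]
    ring_nf
  rw [hlim]
  refine (((tendsto_log_nhdsWithin_im_neg_of_re_neg_of_im_zero hre him).mul_const c).cexp).congr' ?_
  filter_upwards [self_mem_nhdsWithin] with z (hz : z.im < 0)
  exact (cpow_def_of_ne_zero (fun h => by simp [h] at hz) c).symm

lemma exp_two_pi_I_mul_quarter : exp (-2 * π * I * (-(1:ℂ) / 4)) = I := by
  convert exp_pi_div_two_mul_I using 2; ring

lemma exp_neg_two_pi_I_mul_quarter : exp (-2 * π * I * ((1:ℂ) / 4)) = -I := by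
  convert exp_neg_pi_div_two_mul_I using 2; ring

def jumpRight : Matrix (Fin 4) (Fin 4) ℂ := !![0, 0, 1, 0; 0, 1, 0, 0; -1, 0, 0, 0; 0, 0, 0, 1]

def jumpLeft : Matrix (Fin 4) (Fin 4) ℂ := !![1, 0, 0, 0; 0, 0, 0, 1; 0, 0, 1, 0; 0, -1, 0, 0]

lemma jumpLeft_transpose_mul_self : jumpLeftᵀ * jumpLeft = 1 := by
  ext i j
  fin_cases i <;> fin_cases j <;> simp [jumpLeft, mul_apply, Fin.sum_univ_four]

lemma ofReal_sqrt_two_sq : (Real.sqrt 2 : ℂ) ^ 2 = 2 := by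
  rw [← ofReal_pow, Real.sq_sqrt zero_le_two, ofReal_ofNat]

lemma Amat_mul_conjTranspose : Amat * Amatᴴ = 1 := by
  ext i j
  fin_cases i <;> fin_cases j <;>
    simp [Amat, mul_apply, Fin.sum_univ_four, conjTranspose_apply, one_apply] <;>
    ring_nf <;> norm_num [I_sq, ofReal_sqrt_two_sq]

lemma Amat_mul_inv : Amat * Amat⁻¹ = 1 := by
  rw [inv_eq_right_inv Amat_mul_conjTranspose, Amat_mul_conjTranspose]

lemma diagonal_mul_Amat_eq_mul_jumpRight (p q r s : ℂ) :
    diagonal ![p * I, q, r * -I, s] * Amat = diagonal ![p, q, r, s] * Amat * jumpRight := by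
  ext i j
  rw [diagonal_mul, mul_apply]
  fin_cases i <;> fin_cases j <;>
    simp [Amat, jumpRight, Fin.sum_univ_four] <;> ring_nf <;> simp [I_sq]

lemma diagonal_mul_Amat_eq_mul_jumpLeft_transpose (p q r s : ℂ) :
    diagonal ![p, q * I, r, s * -I] * Amat = diagonal ![p, q, r, s] * Amat * jumpLeftᵀ := by
  ext i j
  rw [diagonal_mul, mul_apply]
  fin_cases i <;> fin_cases j <;>
    simp [Amat, jumpLeft, Fin.sum_univ_four] <;> ring_nf <;> simp [I_sq]

lemma mem_twoCutPlane_iff {z : ℂ} :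
    z ∈ twoCutPlane ↔ 1 - z ∈ slitPlane ∧ z + 1 ∈ slitPlane := by
  simp only [twoCutPlane, mem_ofPred_eq, mem_slitPlane_iff, sub_re, add_re, one_re, sub_im,
    add_im, one_im]
  constructor
  · intro h
    by_cases him : z.im = 0
    · simp only [him, true_and, not_or, not_le] at h
      exact ⟨.inl (by linarith), .inl (by linarith)⟩
    · exact ⟨.inr (by simpa using him), .inr (by simpa using him)⟩
  · rintro ⟨h₁, h₂⟩ ⟨him, hre⟩
    simp only [him, zero_sub, neg_zero, ne_eq, not_true_eq_false, or_false, add_zero] at h₁ h₂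
    rcases hre with hre | hre <;> linarith

lemma analyticAt_one_sub_cpow {w : ℂ} (hw : 1 - w ∈ slitPlane) (c : ℂ) :
    AnalyticAt ℂ (fun z => (1 - z) ^ c) w :=
  (analyticAt_const.sub analyticAt_id).cpow analyticAt_const hw

lemma analyticAt_add_one_cpow {w : ℂ} (hw : w + 1 ∈ slitPlane) (c : ℂ) :
    AnalyticAt ℂ (fun z => (z + 1) ^ c) w :=
  (analyticAt_id.add analyticAt_const).cpow analyticAt_const hw

lemma analyticOnNhd_Nmat_apply (i j : Fin 4) :
    AnalyticOnNhd ℂ (fun z => Nmat z i j) twoCutPlane := by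
  intro z hz
  obtain ⟨h₁, h₂⟩ := mem_twoCutPlane_iff.1 hz
  simp only [Nmat, diagonal_mul]
  refine AnalyticAt.mul ?_ analyticAt_const
  fin_cases i
  · exact analyticAt_one_sub_cpow h₁ _
  · exact analyticAt_add_one_cpow h₂ _
  · exact analyticAt_one_sub_cpow h₁ _
  · exact analyticAt_add_one_cpow h₂ _

lemma tendsto_one_sub_cpow_nhdsWithin_im_pos {x : ℝ} (hx : 1 < x) (c : ℂ) :
    Tendsto (fun z : ℂ => (1 - z) ^ c) (𝓝[{z | 0 < z.im}] (x : ℂ))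
      (𝓝 ((1 - x) ^ c * exp (-2 * π * I * c))) :=
  (tendsto_cpow_const_nhdsWithin_im_neg_of_re_neg_of_im_zero (a := 1 - x) (by simpa) (by simp)
    c).comp ((continuous_sub_left (1 : ℂ)).continuousWithinAt.tendsto_nhdsWithin
      fun z (hz : 0 < z.im) => show (1 - z).im < 0 by simpa)

lemma tendsto_one_sub_cpow_nhdsWithin_im_neg {x : ℝ} (hx : 1 < x) (c : ℂ) :
    Tendsto (fun z : ℂ => (1 - z) ^ c) (𝓝[{z | z.im < 0}] (x : ℂ)) (𝓝 ((1 - x) ^ c)) :=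
  ((continuousWithinAt_cpow_const_of_re_neg_of_im_zero (a := 1 - x) (by simpa) (by simp)
    c).comp (continuous_sub_left (1 : ℂ)).continuousWithinAt
      fun z (hz : z.im < 0) => show 0 ≤ (1 - z).im by simp; linarith).tendsto

lemma tendsto_add_one_cpow_nhdsWithin_im_pos {x : ℝ} (hx : x < -1) (c : ℂ) :
    Tendsto (fun z : ℂ => (z + 1) ^ c) (𝓝[{z | 0 < z.im}] (x : ℂ)) (𝓝 ((x + 1) ^ c)) :=
  (ContinuousWithinAt.comp (f := (· + 1))
    (continuousWithinAt_cpow_const_of_re_neg_of_im_zero (a := x + 1) (by simp; linarith)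
      (by simp) c) (continuous_add_const (1 : ℂ)).continuousWithinAt
      fun z (hz : 0 < z.im) => show 0 ≤ (z + 1).im by simp; linarith).tendsto

lemma tendsto_add_one_cpow_nhdsWithin_im_neg {x : ℝ} (hx : x < -1) (c : ℂ) :
    Tendsto (fun z : ℂ => (z + 1) ^ c) (𝓝[{z | z.im < 0}] (x : ℂ))
      (𝓝 ((x + 1) ^ c * exp (-2 * π * I * c))) :=
  (tendsto_cpow_const_nhdsWithin_im_neg_of_re_neg_of_im_zero (a := x + 1) (by simp; linarith)
    (by simp) c).comp ((continuous_add_const (1 : ℂ)).continuousWithinAt.tendsto_nhdsWithin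
      fun z (hz : z.im < 0) => show (z + 1).im < 0 by simpa)

lemma tendsto_Nmat {l : Filter ℂ} {p q r s : ℂ}
    (hp : Tendsto (fun z => (1 - z) ^ (-(1:ℂ)/4)) l (𝓝 p))
    (hq : Tendsto (fun z => (z + 1) ^ (-(1:ℂ)/4)) l (𝓝 q))
    (hr : Tendsto (fun z => (1 - z) ^ ((1:ℂ)/4)) l (𝓝 r))
    (hs : Tendsto (fun z => (z + 1) ^ ((1:ℂ)/4)) l (𝓝 s)) :
    Tendsto Nmat l (𝓝 (diagonal ![p, q, r, s] * Amat)) :=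
  ((continuous_id.matrix_diagonal.matrix_mul continuous_const).tendsto _).comp
    (hp.matrixVecCons (hq.matrixVecCons (hr.matrixVecCons (hs.matrixVecCons tendsto_const_nhds))))

lemma tendsto_add_mul_I_nhdsWithin_im_pos (x : ℝ) :
    Tendsto (fun ε : ℝ => (x : ℂ) + ε * I) (𝓝[>] 0) (𝓝[{z | 0 < z.im}] (x : ℂ)) :=
  tendsto_nhdsWithin_iff.2
    ⟨((continuous_const.add (continuous_ofReal.mul continuous_const)).tendsto' 0 _
      (by simp)).mono_left nhdsWithin_le_nhds,
    eventually_nhdsWithin_of_forall fun ε (hε : 0 < ε) => by simpa⟩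

lemma tendsto_sub_mul_I_nhdsWithin_im_neg (x : ℝ) :
    Tendsto (fun ε : ℝ => (x : ℂ) - ε * I) (𝓝[>] 0) (𝓝[{z | z.im < 0}] (x : ℂ)) :=
  tendsto_nhdsWithin_iff.2
    ⟨((continuous_const.sub (continuous_ofReal.mul continuous_const)).tendsto' 0 _
      (by simp)).mono_left nhdsWithin_le_nhds,
    eventually_nhdsWithin_of_forall fun ε (hε : 0 < ε) => by simpa⟩

section OneSidedLimits

variable {x : ℝ}

lemma tendsto_Nmat_nhdsWithin_im_pos_of_one_lt (hx : 1 < x) :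
    Tendsto Nmat (𝓝[{z | 0 < z.im}] (x : ℂ)) (𝓝 (Nmat x * jumpRight)) := by
  have hslit : (x : ℂ) + 1 ∈ slitPlane := by simp [mem_slitPlane_iff]; linarith
  have := tendsto_Nmat (tendsto_one_sub_cpow_nhdsWithin_im_pos hx _)
    ((analyticAt_add_one_cpow hslit _).continuousAt.tendsto.mono_left nhdsWithin_le_nhds)
    (tendsto_one_sub_cpow_nhdsWithin_im_pos hx _)
    ((analyticAt_add_one_cpow hslit _).continuousAt.tendsto.mono_left nhdsWithin_le_nhds)
  rwa [exp_two_pi_I_mul_quarter, exp_neg_two_pi_I_mul_quarter,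
    diagonal_mul_Amat_eq_mul_jumpRight] at this

lemma tendsto_Nmat_nhdsWithin_im_neg_of_one_lt (hx : 1 < x) :
    Tendsto Nmat (𝓝[{z | z.im < 0}] (x : ℂ)) (𝓝 (Nmat x)) := by
  have hslit : (x : ℂ) + 1 ∈ slitPlane := by simp [mem_slitPlane_iff]; linarith
  exact tendsto_Nmat (tendsto_one_sub_cpow_nhdsWithin_im_neg hx _)
    ((analyticAt_add_one_cpow hslit _).continuousAt.tendsto.mono_left nhdsWithin_le_nhds)
    (tendsto_one_sub_cpow_nhdsWithin_im_neg hx _)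
    ((analyticAt_add_one_cpow hslit _).continuousAt.tendsto.mono_left nhdsWithin_le_nhds)

lemma tendsto_Nmat_nhdsWithin_im_pos_of_lt_neg_one (hx : x < -1) :
    Tendsto Nmat (𝓝[{z | 0 < z.im}] (x : ℂ)) (𝓝 (Nmat x)) := by
  have hslit : 1 - (x : ℂ) ∈ slitPlane := by simp [mem_slitPlane_iff]; linarith
  exact tendsto_Nmat
    ((analyticAt_one_sub_cpow hslit _).continuousAt.tendsto.mono_left nhdsWithin_le_nhds)
    (tendsto_add_one_cpow_nhdsWithin_im_pos hx _)
    ((analyticAt_one_sub_cpow hslit _).continuousAt.tendsto.mono_left nhdsWithin_le_nhds)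
    (tendsto_add_one_cpow_nhdsWithin_im_pos hx _)

lemma tendsto_Nmat_nhdsWithin_im_neg_of_lt_neg_one (hx : x < -1) :
    Tendsto Nmat (𝓝[{z | z.im < 0}] (x : ℂ)) (𝓝 (Nmat x * jumpLeftᵀ)) := by
  have hslit : 1 - (x : ℂ) ∈ slitPlane := by simp [mem_slitPlane_iff]; linarith
  have := tendsto_Nmat
    ((analyticAt_one_sub_cpow hslit _).continuousAt.tendsto.mono_left nhdsWithin_le_nhds)
    (tendsto_add_one_cpow_nhdsWithin_im_neg hx _)
    ((analyticAt_one_sub_cpow hslit _).continuousAt.tendsto.mono_left nhdsWithin_le_nhds)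
    (tendsto_add_one_cpow_nhdsWithin_im_neg hx _)
  rwa [exp_two_pi_I_mul_quarter, exp_neg_two_pi_I_mul_quarter,
    diagonal_mul_Amat_eq_mul_jumpLeft_transpose] at this

end OneSidedLimits

lemma isBigO_inv_add_const_cobounded (t : ℂ) :
    (fun z : ℂ => (z + t)⁻¹) =O[Bornology.cobounded ℂ] (·⁻¹) :=
  (IsEquivalent.refl.add_isLittleO (isLittleO_const_id_cobounded t)).inv.isBigO

lemma cpow_mul_cpow_neg_of_im_eq {a b : ℂ} (h : a.im = b.im) (hb : b.im ≠ 0) (c : ℂ) :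
    a ^ c * b ^ (-c) = (a / b) ^ c := by
  have ha0 : a ≠ 0 := fun h0 => hb (by simp [← h, h0])
  have hb0 : b ≠ 0 := fun h0 => hb (by simp [h0])
  have hargb : arg b ≠ π := fun h0 => hb (arg_eq_pi_iff.1 h0).2
  have hmem : arg a + arg b⁻¹ ∈ Set.Ioc (-π) π := by
    rw [arg_inv, if_neg hargb]
    rcases hb.lt_or_gt with hneg | hpos
    · have := arg_neg_iff.2 hneg; have := arg_neg_iff.2 (h ▸ hneg)
      constructor <;> linarith [neg_pi_lt_arg a, neg_pi_lt_arg b]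
    · have := arg_nonneg_iff.2 hpos.le; have := arg_nonneg_iff.2 (h ▸ hpos).le
      have := (arg_le_pi b).lt_of_ne hargb
      constructor <;> linarith [arg_le_pi a, neg_pi_lt_arg b]
  rw [div_eq_mul_inv, cpow_def_of_ne_zero (mul_ne_zero ha0 (inv_ne_zero hb0)),
    log_mul ha0 (inv_ne_zero hb0) hmem, log_inv b hargb, cpow_def_of_ne_zero ha0,
    cpow_def_of_ne_zero hb0, ← Complex.exp_add]
  ring_nf

lemma isBigO_cpow_sub_one {α : Type*} {l : Filter α} {u g : α → ℂ} (c : ℂ)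
    (hg : Tendsto g l (𝓝 0)) (hu : (fun t => u t - 1) =O[l] g) :
    (fun t => u t ^ c - 1) =O[l] g := by
  have hu1 : Tendsto u l (𝓝 1) := by
    simpa using (hu.trans_tendsto hg).add_const 1
  have hd : DifferentiableAt ℂ (· ^ c) (1 : ℂ) :=
    differentiableAt_id.cpow_const (by simp [slitPlane])
  have := hd.isBigO_sub.comp_tendsto hu1
  simpa [one_cpow, Function.comp_def] using this.trans hu

lemma isBigO_cpow_mul_cpow_neg_sub_one {a b : ℂ → ℂ} (k : ℝ) (c : ℂ)
    (hab : ∀ z, a z = b z + k)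
    (hb : ∀ z : ℂ, z.im ≠ 0 → (b z).im ≠ 0)
    (hb_inv : (fun z => (b z)⁻¹) =O[Bornology.cobounded ℂ] (·⁻¹)) :
    (fun z => a z ^ c * b z ^ (-c) - 1)
      =O[Bornology.cobounded ℂ ⊓ 𝓟 {z : ℂ | z.im ≠ 0}] (·⁻¹) := by
  have him : ∀ᶠ z in Bornology.cobounded ℂ ⊓ 𝓟 {z : ℂ | z.im ≠ 0}, z.im ≠ 0 :=
    mem_inf_of_right (mem_principal_self _)
  have hquot : (fun z => a z / b z - 1)
      =O[Bornology.cobounded ℂ ⊓ 𝓟 {z : ℂ | z.im ≠ 0}] (·⁻¹) := by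
    refine ((hb_inv.const_mul_left (k : ℂ)).mono inf_le_left).congr' ?_ EventuallyEq.rfl
    filter_upwards [him] with z hz
    have hb0 : b z ≠ 0 := fun h => hb z hz (by simp [h])
    rw [hab]
    field_simp
    ring
  refine (isBigO_cpow_sub_one c (tendsto_inv₀_cobounded.mono_left inf_le_left) hquot).congr' ?_
    EventuallyEq.rfl
  filter_upwards [him] with z hz
  rw [cpow_mul_cpow_neg_of_im_eq (by simp [hab]) (hb z hz)]

lemma Nmat_mul_inv_Amat (z : ℂ) :
    Nmat z * Amat⁻¹ = diagonal ![(1 - z) ^ (-(1:ℂ)/4), (z + 1) ^ (-(1:ℂ)/4),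
      (1 - z) ^ ((1:ℂ)/4), (z + 1) ^ ((1:ℂ)/4)] := by
  rw [Nmat, mul_assoc, Amat_mul_inv, mul_one]

lemma isBigO_Nmat_mul_inv_Amat_mul_diagonal_sub_one (i j : Fin 4) :
    (fun z : ℂ => (Nmat z * Amat⁻¹ * diagonal ![(-z) ^ ((1:ℂ)/4), z ^ ((1:ℂ)/4),
        (-z) ^ (-(1:ℂ)/4), z ^ (-(1:ℂ)/4)] - 1) i j)
      =O[Bornology.cobounded ℂ ⊓ 𝓟 {z : ℂ | z.im ≠ 0}] (·⁻¹) := by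
  simp only [Nmat_mul_inv_Amat, diagonal_mul_diagonal, Matrix.sub_apply, one_apply,
    diagonal_apply]
  rcases eq_or_ne i j with rfl | hij
  · simp only [if_true, neg_div]
    fin_cases i <;>
      simp only [Fin.zero_eta, Fin.mk_one, Fin.reduceFinMk, cons_val_zero, cons_val_one, cons_val]
    · refine (isBigO_cpow_mul_cpow_neg_sub_one (a := (- ·)) (b := (1 - ·)) (-1) (1 / 4)
        (fun z => by push_cast; ring) (fun z hz => by simpa using hz) ?_).congr_left
          fun z => by ring
      refine (isBigO_inv_add_const_cobounded (-1)).neg_left.congr_left fun z => ?_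
      rw [← inv_neg, neg_add, neg_neg, neg_add_eq_sub]
    · exact (isBigO_cpow_mul_cpow_neg_sub_one (a := fun z => z) (b := (· + 1)) (-1) (1 / 4)
        (fun z => by push_cast; ring) (fun z hz => by simpa using hz)
        (isBigO_inv_add_const_cobounded 1)).congr_left fun z => by ring
    · exact isBigO_cpow_mul_cpow_neg_sub_one (a := (1 - ·)) (b := (- ·)) 1 (1 / 4)
        (fun z => by push_cast; ring) (fun z hz => by simpa using hz)
        ((isBigO_refl _ _).neg_left.congr_left fun z => inv_neg.symm)
    · exact isBigO_cpow_mul_cpow_neg_sub_one (a := (· + 1)) (b := fun z => z) 1 (1 / 4)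
        (fun z => by push_cast; ring) (fun z hz => hz) (isBigO_refl _ _)
  · simpa only [if_neg hij, sub_zero] using isBigO_zero _ _

/-- `N` is analytic in `ℂ ∖ ((-∞,-1] ∪ [1,∞))`, satisfies the stated jump relations on
`(1,∞)` and `(-∞,-1)`, and `N(z)·A⁻¹·diag((-z)^{1/4}, z^{1/4}, (-z)^{-1/4}, z^{-1/4}) = I + O(z⁻¹)`
as `z → ∞` off `ℝ`. -/
theorem gap_tacnode_N_RH_problem :
    (∀ i j : Fin 4, AnalyticOnNhd ℂ (fun z : ℂ => Nmat z i j) twoCutPlane) ∧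
    (∀ x : ℝ, 1 < x →
      ∃ Np Nm : Matrix (Fin 4) (Fin 4) ℂ,
        Tendsto (fun ε : ℝ => Nmat ((x:ℂ) + ε * Complex.I)) (𝓝[>] (0:ℝ)) (𝓝 Np) ∧
        Tendsto (fun ε : ℝ => Nmat ((x:ℂ) - ε * Complex.I)) (𝓝[>] (0:ℝ)) (𝓝 Nm) ∧
        Np = Nm * !![0, 0, 1, 0; 0, 1, 0, 0; -1, 0, 0, 0; 0, 0, 0, 1]) ∧
    (∀ x : ℝ, x < -1 →
      ∃ Np Nm : Matrix (Fin 4) (Fin 4) ℂ,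
        Tendsto (fun ε : ℝ => Nmat ((x:ℂ) + ε * Complex.I)) (𝓝[>] (0:ℝ)) (𝓝 Np) ∧
        Tendsto (fun ε : ℝ => Nmat ((x:ℂ) - ε * Complex.I)) (𝓝[>] (0:ℝ)) (𝓝 Nm) ∧
        Np = Nm * !![1, 0, 0, 0; 0, 0, 0, 1; 0, 0, 1, 0; 0, -1, 0, 0]) ∧
    (∀ i j : Fin 4,
      (fun z : ℂ =>
          (Nmat z * Amat⁻¹ *
            Matrix.diagonal ![(-z) ^ ((1:ℂ)/4), z ^ ((1:ℂ)/4),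
              (-z) ^ (-(1:ℂ)/4), z ^ (-(1:ℂ)/4)]
            - 1) i j)
        =O[(Bornology.cobounded ℂ) ⊓ Filter.principal {z : ℂ | z.im ≠ 0}]
          (fun z : ℂ => z⁻¹)) := by
  refine ⟨analyticOnNhd_Nmat_apply, fun x hx => ?_, fun x hx => ?_,
    isBigO_Nmat_mul_inv_Amat_mul_diagonal_sub_one⟩
  · exact ⟨_, _,
      (tendsto_Nmat_nhdsWithin_im_pos_of_one_lt hx).comp
        (tendsto_add_mul_I_nhdsWithin_im_pos x),
      (tendsto_Nmat_nhdsWithin_im_neg_of_one_lt hx).comp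
        (tendsto_sub_mul_I_nhdsWithin_im_neg x),
      rfl⟩
  · refine ⟨_, _,
      (tendsto_Nmat_nhdsWithin_im_pos_of_lt_neg_one hx).comp
        (tendsto_add_mul_I_nhdsWithin_im_pos x),
      (tendsto_Nmat_nhdsWithin_im_neg_of_lt_neg_one hx).comp
        (tendsto_sub_mul_I_nhdsWithin_im_neg x),
      ?_⟩
    show Nmat x = Nmat x * jumpLeftᵀ * jumpLeft
    rw [mul_assoc, jumpLeft_transpose_mul_self, mul_one]
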